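/- If in addition 0 < α < 2/(nL), then the FRSD iterates satisfy, for every k ≥ 0, ‖x̂(k+1) − x*_vec‖ ≤ η ‖x̂(k) − x*_vec‖ + α nL ‖x(k) − x̂(k)‖_C + α v ṽ² √n κ₃ σ_R^k ‖∇f(x(k))‖, where η = max{|1 − nLα|, |1 − nμα|}. -/

import Mathlib

open Matrix Filter
open scoped Kronecker

noncomputable section

/-- Euclidean norm on `ι → ℝ`. -/
def eucNorm {ι : Type*} [Fintype ι] (z : ι → ℝ) : ℝ := Real.sqrt (∑ i, z i ^ 2)

/-- Spectral norm (operator 2-norm) of a square real matrix. -/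
def specNorm {ι : Type*} [Fintype ι] (A : Matrix ι ι ℝ) : ℝ :=
  sSup {c : ℝ | ∃ z : ι → ℝ, eucNorm z ≤ 1 ∧ c = eucNorm (A.mulVec z)}

/-- Matrix norm induced by a vector norm `N`: `sup_{z ≠ 0} N (A z) / N z`. -/
def opNorm {ι : Type*} [Fintype ι] (N : (ι → ℝ) → ℝ) (A : Matrix ι ι ℝ) : ℝ :=
  sSup {c : ℝ | ∃ z : ι → ℝ, z ≠ 0 ∧ c = N (A.mulVec z) / N z}

/-- `g` is the gradient of `f : ℝ^p → ℝ`. -/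
def IsGradient {p : ℕ} (f : (Fin p → ℝ) → ℝ) (g : (Fin p → ℝ) → Fin p → ℝ) : Prop :=
  ∀ x, HasFDerivAt f (∑ j, g x j • (ContinuousLinearMap.proj j : (Fin p → ℝ) →L[ℝ] ℝ)) x

/-- `R = R̄ ⊗ I_p`. -/
def RK (n p : ℕ) (Rb : Matrix (Fin n) (Fin n) ℝ) :
    Matrix (Fin n × Fin p) (Fin n × Fin p) ℝ :=
  Rb ⊗ₖ (1 : Matrix (Fin p) (Fin p) ℝ)

/-- `V_∞ = (1_n π^T) ⊗ I_p`. -/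
def VinfK (n p : ℕ) (π : Fin n → ℝ) :
    Matrix (Fin n × Fin p) (Fin n × Fin p) ℝ :=
  (Matrix.of (fun _ j => π j) : Matrix (Fin n) (Fin n) ℝ) ⊗ₖ (1 : Matrix (Fin p) (Fin p) ℝ)

/-- `V(k) = R̄^k ⊗ I_p`. -/
def VK (n p : ℕ) (Rb : Matrix (Fin n) (Fin n) ℝ) (k : ℕ) :
    Matrix (Fin n × Fin p) (Fin n × Fin p) ℝ :=
  (Rb ^ k) ⊗ₖ (1 : Matrix (Fin p) (Fin p) ℝ)

/-- `Ṽ(k)⁻¹ = diag(((R̄^k)_{11})⁻¹, …, ((R̄^k)_{nn})⁻¹) ⊗ I_p`. -/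
def VtinvK (n p : ℕ) (Rb : Matrix (Fin n) (Fin n) ℝ) (k : ℕ) :
    Matrix (Fin n × Fin p) (Fin n × Fin p) ℝ :=
  Matrix.diagonal (fun q => ((Rb ^ k) q.1 q.1)⁻¹)

/-- `∇f(z) = (∇f_1(z_1), …, ∇f_n(z_n))` block-wise. -/
def gradf {n p : ℕ} (g : Fin n → (Fin p → ℝ) → Fin p → ℝ) (z : Fin n × Fin p → ℝ) :
    Fin n × Fin p → ℝ :=
  fun q => g q.1 (fun j => z (q.1, j)) q.2

/-- `x*_vec = 1_n ⊗ x*`. -/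
def starVec (n p : ℕ) (xstar : Fin p → ℝ) : Fin n × Fin p → ℝ := fun q => xstar q.2

end

/-!
Because `V∞ R = V∞` and `V∞ (I - R) = 0`, the dual variable never moves the average:
`x̂(k+1) = x̂(k) - α V∞ Ṽ(k)⁻¹ ∇f(x(k))`. Write `x̂(k) = 1 ⊗ x̄` with `x̄ = ∑ⱼ πⱼ xⱼ(k)` and split
`V∞ Ṽ(k)⁻¹ ∇f(x)` into the exact gradient of `∑ᵢ fᵢ` at `x̄`, the disagreement
`∑ⱼ (∇fⱼ(xⱼ) - ∇fⱼ(x̄))`, and `V∞ (Ṽ(k)⁻¹ - diag(π)⁻¹ ⊗ I) ∇f(x)`.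

The first part is a gradient step for `∑ᵢ fᵢ`, which is `nμ`-strongly convex with `nL`-Lipschitz
gradient; cocoercivity of the gradient of `∑ᵢ fᵢ - (nμ/2)‖·‖²` makes it contract by `η`. The second
part is at most `nL ‖x - x̂‖` by Lipschitz continuity and Cauchy–Schwarz over the blocks. For the
third, `|r⁻¹ - π⁻¹| = |r - π| |r⁻¹| |π⁻¹|`, where `|(R̄^k)ᵢᵢ - πᵢ| ≤ ‖V(k) - V∞‖ ≤ κ₃ σ_R^k`
and both `((R̄^k)ᵢᵢ)⁻¹` and its limit `πᵢ⁻¹` are at most `ṽ`; likewise `‖V∞‖ = lim ‖V(k)‖ ≤ v`.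
-/

open scoped Matrix.Norms.L2Operator Topology

section GradientStep

open scoped RealInnerProductSpace

variable {H : Type*} [NormedAddCommGroup H] [InnerProductSpace ℝ H]

theorem norm_sub_sq_le_mul_inner_of_convex_of_descent {h : H → ℝ} {G : H → H} {L : ℝ}
    (hL : 0 < L) (hconv : ∀ a b, h a + ⟪G a, b - a⟫ ≤ h b)
    (hdesc : ∀ a b, h b ≤ h a + ⟪G a, b - a⟫ + L / 2 * ‖b - a‖ ^ 2) (x y : H) :
    ‖G x - G y‖ ^ 2 ≤ L * ⟪G x - G y, x - y⟫ := by
  -- Evaluate the convexity bound from `y` and the descent bound from `x` at the point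
  -- `z = x - L⁻¹ • (G x - G y)`.
  have half : ∀ x y : H, h y + ⟪G y, x - y⟫ + 1 / (2 * L) * ‖G x - G y‖ ^ 2 ≤ h x := by
    intro x y
    set z := x - L⁻¹ • (G x - G y)
    have hz : z - y = (z - x) + (x - y) := by abel
    have hzx : z - x = -(L⁻¹ • (G x - G y)) := by simp [z]
    have key : ⟪G x, z - x⟫ - ⟪G y, z - x⟫ + L / 2 * ‖z - x‖ ^ 2
        = -(1 / (2 * L)) * ‖G x - G y‖ ^ 2 := by
      rw [← inner_sub_left, hzx, inner_neg_right, real_inner_smul_right,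
        real_inner_self_eq_norm_sq, norm_neg, norm_smul, Real.norm_of_nonneg (by positivity)]
      field_simp
      ring
    have hlow := hconv y z
    have hup := hdesc x z
    rw [hz, inner_add_right] at hlow
    linarith
  have h1 := half x y
  have h2 := half y x
  rw [norm_sub_rev (G y)] at h2
  have hcross : ⟪G y, x - y⟫ + ⟪G x, y - x⟫ = -⟪G x - G y, x - y⟫ := by
    rw [← neg_sub x y, inner_neg_right, inner_sub_left]; ring
  have hhalves : 1 / (2 * L) * ‖G x - G y‖ ^ 2 + 1 / (2 * L) * ‖G x - G y‖ ^ 2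
      = L⁻¹ * ‖G x - G y‖ ^ 2 := by field_simp; ring
  have : L⁻¹ * ‖G x - G y‖ ^ 2 ≤ ⟪G x - G y, x - y⟫ := by linarith
  rwa [inv_mul_le_iff₀ hL] at this

theorem sq_sub_two_mul_add_sq_le {a b s m M α : ℝ} (hm : 0 < m) (hmM : m ≤ M)
    (ha : 0 ≤ a) (hb : 0 ≤ b) (hs : s ≤ a * b) (hkey : a ^ 2 + m * M * b ^ 2 ≤ (m + M) * s)
    (hα : 0 ≤ α) :
    b ^ 2 - 2 * α * s + α ^ 2 * a ^ 2 ≤ (max |1 - α * M| |1 - α * m| * b) ^ 2 := by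
  -- `hkey` forces `m b ≤ a ≤ M b`; the coefficient of `a²` below has the sign of
  -- `α (m + M) - 2`, so the worst case is `a = m b` or `a = M b` accordingly.
  have hq : (a - m * b) * (a - M * b) ≤ 0 := by nlinarith
  have hma : m * b ≤ a := by nlinarith [mul_le_mul_of_nonneg_right hmM hb]
  have haM : a ≤ M * b := by nlinarith [mul_le_mul_of_nonneg_right hmM hb]
  rw [mul_pow]
  rcases le_total (α * (m + M)) 2 with hc | hc
  · have hη : (1 - α * m) ^ 2 ≤ max |1 - α * M| |1 - α * m| ^ 2 := by
      rw [← sq_abs]; gcongr; exact le_max_right _ _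
    have hcoef : α ^ 2 * (m + M) - 2 * α ≤ 0 := by nlinarith
    have : (m + M) * (b ^ 2 - 2 * α * s + α ^ 2 * a ^ 2) ≤ (m + M) * ((1 - α * m) ^ 2 * b ^ 2) := by
      nlinarith [mul_le_mul_of_nonpos_left (pow_le_pow_left₀ (by positivity) hma 2) hcoef]
    nlinarith [le_of_mul_le_mul_left this (by linarith : 0 < m + M)]
  · have hη : (1 - α * M) ^ 2 ≤ max |1 - α * M| |1 - α * m| ^ 2 := by
      rw [← sq_abs]; gcongr; exact le_max_left _ _
    have hcoef : 0 ≤ α ^ 2 * (m + M) - 2 * α := by nlinarith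
    have : (m + M) * (b ^ 2 - 2 * α * s + α ^ 2 * a ^ 2) ≤ (m + M) * ((1 - α * M) ^ 2 * b ^ 2) := by
      nlinarith [mul_le_mul_of_nonneg_left (pow_le_pow_left₀ ha haM 2) hcoef]
    nlinarith [le_of_mul_le_mul_left this (by linarith : 0 < m + M)]

variable [CompleteSpace H]

theorem le_add_inner_add_sq_of_gradient_lipschitz {F : H → ℝ} {G : H → H} {L : ℝ}
    (hF : ∀ x, HasGradientAt F (G x) x) (hG : ∀ x y, ‖G x - G y‖ ≤ L * ‖x - y‖) (x y : H) :
    F y ≤ F x + ⟪G x, y - x⟫ + L / 2 * ‖y - x‖ ^ 2 := by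
  set d := y - x
  -- mean value theorem for `ψ`, whose derivative `⟪G (x + s • d) - G x, d⟫ - L s ‖d‖²` is `≤ 0`
  let ψ : ℝ → ℝ := fun s => F (x + s • d) - s * ⟪G x, d⟫ - L / 2 * ‖d‖ ^ 2 * s ^ 2
  have hψ : ∀ s, HasDerivAt ψ (⟪G (x + s • d), d⟫ - ⟪G x, d⟫ - L / 2 * ‖d‖ ^ 2 * (2 * s)) s := by
    intro s
    have hline : HasDerivAt (fun s : ℝ => x + s • d) d s := by
      simpa using ((hasDerivAt_id s).smul_const d).const_add x
    have hFline := (hF (x + s • d)).hasFDerivAt.comp_hasDerivAt s hline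
    simp only [InnerProductSpace.toDual_apply_apply] at hFline
    exact ((hFline.sub ((hasDerivAt_id s).mul_const _)).sub
      ((hasDerivAt_pow 2 s).const_mul _)).congr_deriv (by simp)
  obtain ⟨c, hc, hslope⟩ := exists_hasDerivAt_eq_slope ψ _ zero_lt_one
    (HasDerivAt.continuousOn fun s _ => hψ s) fun s _ => hψ s
  have hderiv : ⟪G (x + c • d), d⟫ - ⟪G x, d⟫ ≤ L * c * ‖d‖ ^ 2 := by
    calc ⟪G (x + c • d), d⟫ - ⟪G x, d⟫ = ⟪G (x + c • d) - G x, d⟫ := (inner_sub_left ..).symm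
      _ ≤ ‖G (x + c • d) - G x‖ * ‖d‖ := real_inner_le_norm _ _
      _ ≤ L * ‖c • d‖ * ‖d‖ := by
          gcongr
          simpa using hG (x + c • d) x
      _ = L * c * ‖d‖ ^ 2 := by rw [norm_smul, Real.norm_of_nonneg hc.1.le]; ring
  have hψ1 : ψ 1 = F y - ⟪G x, d⟫ - L / 2 * ‖d‖ ^ 2 := by simp [ψ, d]
  have hψ0 : ψ 0 = F x := by simp [ψ]
  rw [sub_zero, div_one, hψ1, hψ0] at hslope
  linarith

theorem norm_gradient_sub_sq_add_le_inner {F : H → ℝ} {G : H → H} {μ L : ℝ}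
    (hF : ∀ x, HasGradientAt F (G x) x)
    (hsc : ∀ x y, F x + ⟪G x, y - x⟫ + μ / 2 * ‖y - x‖ ^ 2 ≤ F y)
    (hG : ∀ x y, ‖G x - G y‖ ≤ L * ‖x - y‖) (hμ : 0 ≤ μ) (hμL : μ ≤ L) (x y : H) :
    ‖G x - G y‖ ^ 2 + μ * L * ‖x - y‖ ^ 2 ≤ (μ + L) * ⟪G x - G y, x - y⟫ := by
  have hmono : μ * ‖x - y‖ ^ 2 ≤ ⟪G x - G y, x - y⟫ := by
    have h1 := hsc x y
    have h2 := hsc y x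
    rw [← neg_sub x y, inner_neg_right, norm_neg] at h1
    rw [inner_sub_left]
    linarith
  rcases hμL.eq_or_lt with rfl | hlt
  · have hGμ : ‖G x - G y‖ ^ 2 ≤ (μ * ‖x - y‖) ^ 2 := pow_le_pow_left₀ (norm_nonneg _) (hG x y) 2
    nlinarith
  -- `F - (μ/2)‖·‖²` is convex with `(L - μ)`-descent, hence its gradient is cocoercive.
  have hexp : ∀ a b : H, μ / 2 * ‖b‖ ^ 2
      = μ / 2 * ‖a‖ ^ 2 + ⟪μ • a, b - a⟫ + μ / 2 * ‖b - a‖ ^ 2 := by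
    intro a b
    rw [real_inner_smul_left, ← add_sub_cancel a b, norm_add_sq_real]
    simp only [add_sub_cancel_left]
    ring
  have hco := norm_sub_sq_le_mul_inner_of_convex_of_descent (h := fun a => F a - μ / 2 * ‖a‖ ^ 2)
    (G := fun a => G a - μ • a) (sub_pos.mpr hlt)
    (fun a b => by
      have := hsc a b
      have := hexp a b
      rw [inner_sub_left]
      linarith)
    (fun a b => by
      have := le_add_inner_add_sq_of_gradient_lipschitz hF hG a b
      have := hexp a b
      rw [inner_sub_left]
      linarith) x y
  have e : G x - μ • x - (G y - μ • y) = (G x - G y) - μ • (x - y) := by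
    rw [smul_sub]; abel
  have e1 : ‖(G x - G y) - μ • (x - y)‖ ^ 2
      = ‖G x - G y‖ ^ 2 - 2 * μ * ⟪G x - G y, x - y⟫ + μ ^ 2 * ‖x - y‖ ^ 2 := by
    rw [norm_sub_sq_real, real_inner_smul_right, norm_smul, Real.norm_of_nonneg hμ]; ring
  have e2 : ⟪(G x - G y) - μ • (x - y), x - y⟫ = ⟪G x - G y, x - y⟫ - μ * ‖x - y‖ ^ 2 := by
    rw [inner_sub_left, real_inner_smul_left, real_inner_self_eq_norm_sq]
  rw [e, e1, e2] at hco
  nlinarith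

theorem norm_gradient_step_sub_le {F : H → ℝ} {G : H → H} {μ L α : ℝ}
    (hF : ∀ x, HasGradientAt F (G x) x)
    (hsc : ∀ x y, F x + ⟪G x, y - x⟫ + μ / 2 * ‖y - x‖ ^ 2 ≤ F y)
    (hG : ∀ x y, ‖G x - G y‖ ≤ L * ‖x - y‖) (hμ : 0 < μ) (hμL : μ ≤ L) (hα : 0 ≤ α)
    (x y : H) :
    ‖x - α • G x - (y - α • G y)‖ ≤ max |1 - α * L| |1 - α * μ| * ‖x - y‖ := by
  have e : x - α • G x - (y - α • G y) = (x - y) - α • (G x - G y) := by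
    rw [smul_sub]; abel
  have hsq : ‖(x - y) - α • (G x - G y)‖ ^ 2
      = ‖x - y‖ ^ 2 - 2 * α * ⟪G x - G y, x - y⟫ + α ^ 2 * ‖G x - G y‖ ^ 2 := by
    rw [norm_sub_sq_real, real_inner_smul_right, norm_smul, Real.norm_of_nonneg hα,
      real_inner_comm]
    ring
  rw [e]
  refine (sq_le_sq₀ (norm_nonneg _) (by positivity)).mp ?_
  rw [hsq]
  exact sq_sub_two_mul_add_sq_le hμ hμL (norm_nonneg _) (norm_nonneg _)
    (real_inner_le_norm _ _) (norm_gradient_sub_sq_add_le_inner hF hsc hG hμ.le hμL x y) hα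

end GradientStep

section Limits

variable {E : Type*} [SeminormedAddCommGroup E] {a : ℕ → E} {b : E}

lemma tendsto_of_norm_sub_le_mul_pow {κ σ : ℝ} (hσ0 : 0 ≤ σ) (hσ1 : σ < 1)
    (h : ∀ᶠ k in atTop, ‖a k - b‖ ≤ κ * σ ^ k) : Tendsto a atTop (𝓝 b) := by
  rw [tendsto_iff_norm_sub_tendsto_zero]
  refine squeeze_zero' (Eventually.of_forall fun k => norm_nonneg _) h ?_
  simpa using (tendsto_pow_atTop_nhds_zero_of_lt_one hσ0 hσ1).const_mul κ

lemma le_iSup_norm_of_tendsto (h : Tendsto a atTop (𝓝 b)) (k : ℕ) : ‖a k‖ ≤ ⨆ j, ‖a j‖ :=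
  le_ciSup h.norm.bddAbove_range k

lemma norm_le_iSup_norm_of_tendsto (h : Tendsto a atTop (𝓝 b)) : ‖b‖ ≤ ⨆ j, ‖a j‖ :=
  le_of_tendsto' h.norm (le_iSup_norm_of_tendsto h)

end Limits

lemma abs_inv_sub_inv_le {a b c e : ℝ} (ha : a ≠ 0) (hb : b ≠ 0) (hac : |a⁻¹| ≤ c)
    (hbc : |b⁻¹| ≤ c) (hab : |a - b| ≤ e) : |a⁻¹ - b⁻¹| ≤ c ^ 2 * e := by
  have hc : 0 ≤ c := (abs_nonneg _).trans hac
  calc |a⁻¹ - b⁻¹| = |a⁻¹| * |b⁻¹| * |a - b| := by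
        rw [inv_sub_inv ha hb, abs_div, abs_mul, abs_inv, abs_inv, abs_sub_comm]; ring
    _ ≤ c ^ 2 * e := by rw [sq]; gcongr

theorem sub_pow_eq_pow_sub {R : Type*} [Ring R] {a e : R} (hae : a * e = e) (hea : e * a = e)
    (hee : e * e = e) {k : ℕ} (hk : k ≠ 0) : (a - e) ^ k = a ^ k - e := by
  have hepow : ∀ j : ℕ, e * a ^ j = e := by
    intro j
    induction j with
    | zero => simp
    | succ j ih => rw [pow_succ, ← mul_assoc, ih, hea]
  obtain ⟨j, rfl⟩ := Nat.exists_eq_add_one_of_ne_zero hk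
  induction j with
  | zero => simp
  | succ j ih =>
    rw [pow_succ', ih j.succ_ne_zero, sub_mul, mul_sub, mul_sub, hae, hepow, hee, ← pow_succ']
    abel

section EuclideanNorm

variable {ι : Type*} [Fintype ι]

lemma eucNorm_eq_norm (z : ι → ℝ) : eucNorm z = ‖(WithLp.toLp 2 z : EuclideanSpace ℝ ι)‖ := by
  simp [eucNorm, EuclideanSpace.norm_eq]

lemma eucNorm_nonneg (z : ι → ℝ) : 0 ≤ eucNorm z := Real.sqrt_nonneg _

lemma eucNorm_sq (z : ι → ℝ) : eucNorm z ^ 2 = ∑ i, z i ^ 2 := Real.sq_sqrt (by positivity)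

lemma eucNorm_sub_le (z w : ι → ℝ) : eucNorm (z - w) ≤ eucNorm z + eucNorm w := by
  simp only [eucNorm_eq_norm, WithLp.toLp_sub, norm_sub_le]

lemma eucNorm_smul (c : ℝ) (z : ι → ℝ) : eucNorm (c • z) = |c| * eucNorm z := by
  simp only [eucNorm_eq_norm, WithLp.toLp_smul, norm_smul, Real.norm_eq_abs]

lemma eucNorm_sum_le {κ : Type*} (s : Finset κ) (z : κ → ι → ℝ) :
    eucNorm (∑ j ∈ s, z j) ≤ ∑ j ∈ s, eucNorm (z j) := by
  simp only [eucNorm_eq_norm, WithLp.toLp_sum, norm_sum_le]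

lemma abs_le_eucNorm (z : ι → ℝ) (i : ι) : |z i| ≤ eucNorm z := by
  simpa [eucNorm_eq_norm] using PiLp.norm_apply_le (WithLp.toLp 2 z) i

lemma eucNorm_pos {z : ι → ℝ} (hz : z ≠ 0) : 0 < eucNorm z := by
  rw [eucNorm_eq_norm, norm_pos_iff]
  simpa using hz

lemma eucNorm_le_of_abs_le {z w : ι → ℝ} {c : ℝ} (h : ∀ i, |z i| ≤ c * |w i|) (hc : 0 ≤ c) :
    eucNorm z ≤ c * eucNorm w := by
  rw [← Real.sqrt_sq hc, eucNorm, eucNorm, ← Real.sqrt_mul (sq_nonneg c), Finset.mul_sum]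
  gcongr with i
  rw [← sq_abs (z i), ← sq_abs (w i), ← mul_pow]
  exact pow_le_pow_left₀ (abs_nonneg _) (h i) 2

variable [DecidableEq ι]

lemma toEuclideanCLM_apply (A : Matrix ι ι ℝ) (x : EuclideanSpace ℝ ι) :
    toEuclideanCLM (n := ι) (𝕜 := ℝ) A x = WithLp.toLp 2 (A *ᵥ WithLp.ofLp x) := rfl

lemma eucNorm_mulVec_le (A : Matrix ι ι ℝ) (z : ι → ℝ) : eucNorm (A *ᵥ z) ≤ ‖A‖ * eucNorm z := by
  simpa [eucNorm_eq_norm] using A.l2_opNorm_mulVec (WithLp.toLp 2 z)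

lemma l2_opNorm_le_of_eucNorm_mulVec_le {A : Matrix ι ι ℝ} {C : ℝ} (hC : 0 ≤ C)
    (h : ∀ z, eucNorm (A *ᵥ z) ≤ C * eucNorm z) : ‖A‖ ≤ C := by
  rw [← l2_opNorm_toEuclideanCLM]
  refine ContinuousLinearMap.opNorm_le_bound _ hC fun x => ?_
  simpa [eucNorm_eq_norm, toEuclideanCLM_apply] using h (WithLp.ofLp x)

lemma specNorm_eq_l2_opNorm (A : Matrix ι ι ℝ) : specNorm A = ‖A‖ := by
  rw [← l2_opNorm_toEuclideanCLM, ← ContinuousLinearMap.sSup_unitClosedBall_eq_norm, specNorm]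
  congr 1
  ext c
  constructor
  · rintro ⟨z, hz, rfl⟩
    exact ⟨WithLp.toLp 2 z, by simpa [eucNorm_eq_norm] using hz, by simp [eucNorm_eq_norm]⟩
  · rintro ⟨x, hx, rfl⟩
    exact ⟨WithLp.ofLp x, by simpa [eucNorm_eq_norm] using hx,
      by simp [eucNorm_eq_norm, toEuclideanCLM_apply]⟩

lemma abs_apply_le_l2_opNorm (A : Matrix ι ι ℝ) (i j : ι) : |A i j| ≤ ‖A‖ := by
  calc |A i j| = |(A *ᵥ Pi.single j 1) i| := by simp
    _ ≤ ‖A‖ * eucNorm (Pi.single j 1) := (abs_le_eucNorm _ i).trans (eucNorm_mulVec_le A _)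
    _ = ‖A‖ := by simp [eucNorm_eq_norm]

end EuclideanNorm

lemma one_le_of_eucNorm_le_of_le_mul {ι : Type*} [Fintype ι] [Nonempty ι] {N : (ι → ℝ) → ℝ}
    {κ : ℝ} (hge : ∀ z, eucNorm z ≤ N z) (hle : ∀ z, N z ≤ κ * eucNorm z) : 1 ≤ κ := by
  classical
  obtain ⟨i⟩ := ‹Nonempty ι›
  have h1 : eucNorm (Pi.single i (1 : ℝ)) = 1 := by simp [eucNorm_eq_norm]
  simpa [h1] using (hge _).trans (hle (Pi.single i 1))

section InducedNorm

variable {ι : Type*} [Fintype ι] [DecidableEq ι] {N : (ι → ℝ) → ℝ} {κ : ℝ}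

lemma apply_mulVec_le_opNorm_mul (hge : ∀ z, eucNorm z ≤ N z) (hle : ∀ z, N z ≤ κ * eucNorm z)
    (hκ : 0 ≤ κ) (A : Matrix ι ι ℝ) (z : ι → ℝ) : N (A *ᵥ z) ≤ opNorm N A * N z := by
  rcases eq_or_ne z 0 with rfl | hz
  · have hN0 : N 0 = 0 :=
      le_antisymm (by simpa [eucNorm] using hle 0) (by simpa [eucNorm] using hge 0)
    simp [hN0]
  have hNz : 0 < N z := (eucNorm_pos hz).trans_le (hge z)
  have hbdd : BddAbove {c : ℝ | ∃ w : ι → ℝ, w ≠ 0 ∧ c = N (A *ᵥ w) / N w} := by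
    refine ⟨κ * ‖A‖, ?_⟩
    rintro - ⟨w, hw, rfl⟩
    have hNw : 0 < N w := (eucNorm_pos hw).trans_le (hge w)
    rw [div_le_iff₀ hNw]
    calc N (A *ᵥ w) ≤ κ * (‖A‖ * eucNorm w) :=
          (hle _).trans (by gcongr; exact eucNorm_mulVec_le A w)
      _ ≤ κ * ‖A‖ * N w := by rw [← mul_assoc]; gcongr; exact hge w
  have hle' : N (A *ᵥ z) / N z ≤ opNorm N A := le_csSup hbdd ⟨z, hz, rfl⟩
  rwa [div_le_iff₀ hNz] at hle'

lemma apply_pow_mulVec_le_opNorm_pow_mul (hge : ∀ z, eucNorm z ≤ N z)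
    (hle : ∀ z, N z ≤ κ * eucNorm z) (hκ : 0 ≤ κ) {A : Matrix ι ι ℝ} (hA : 0 ≤ opNorm N A) (k : ℕ) (z : ι → ℝ) :
    N ((A ^ k) *ᵥ z) ≤ opNorm N A ^ k * N z := by
  induction k with
  | zero => simp
  | succ k ih =>
    calc N ((A ^ (k + 1)) *ᵥ z) = N (A *ᵥ ((A ^ k) *ᵥ z)) := by rw [pow_succ', mulVec_mulVec]
      _ ≤ opNorm N A * N ((A ^ k) *ᵥ z) := apply_mulVec_le_opNorm_mul hge hle hκ A _
      _ ≤ opNorm N A ^ (k + 1) * N z := by rw [pow_succ', mul_assoc]; gcongr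

lemma l2_opNorm_pow_le (hge : ∀ z, eucNorm z ≤ N z) (hle : ∀ z, N z ≤ κ * eucNorm z)
    (hκ : 0 ≤ κ) {A : Matrix ι ι ℝ} (hA : 0 ≤ opNorm N A) (k : ℕ) :
    ‖A ^ k‖ ≤ κ * opNorm N A ^ k := by
  refine l2_opNorm_le_of_eucNorm_mulVec_le (by positivity) fun z => ?_
  calc eucNorm ((A ^ k) *ᵥ z) ≤ opNorm N A ^ k * N z :=
        (hge _).trans (apply_pow_mulVec_le_opNorm_pow_mul hge hle hκ hA k z)
    _ ≤ opNorm N A ^ k * (κ * eucNorm z) := by gcongr; exact hle z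
    _ = κ * opNorm N A ^ k * eucNorm z := by ring

end InducedNorm

section LocalObjectives

open scoped RealInnerProductSpace

variable {p : ℕ}

lemma IsGradient.sum {ι : Type*} (s : Finset ι) {f : ι → (Fin p → ℝ) → ℝ}
    {g : ι → (Fin p → ℝ) → Fin p → ℝ} (h : ∀ i ∈ s, IsGradient (f i) (g i)) :
    IsGradient (fun w => ∑ i ∈ s, f i w) (fun w => ∑ i ∈ s, g i w) := by
  intro x
  refine (HasFDerivAt.fun_sum fun i hi => h i hi x).congr_fderiv ?_
  rw [Finset.sum_comm]
  simp only [Finset.sum_apply, Finset.sum_smul]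

lemma IsGradient.eq_zero_of_forall_le {f : (Fin p → ℝ) → ℝ} {g : (Fin p → ℝ) → Fin p → ℝ}
    (h : IsGradient f g) {x : Fin p → ℝ} (hx : ∀ w, f x ≤ f w) : g x = 0 := by
  have h0 := IsLocalMin.hasFDerivAt_eq_zero (Filter.Eventually.of_forall hx) (h x)
  ext m
  simpa [Pi.single_apply] using congrArg (fun T => T (Pi.single m 1)) h0

lemma IsGradient.hasGradientAt_ofLp {f : (Fin p → ℝ) → ℝ} {g : (Fin p → ℝ) → Fin p → ℝ}
    (h : IsGradient f g) (x : EuclideanSpace ℝ (Fin p)) :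
    HasGradientAt (fun u => f (WithLp.ofLp u)) (WithLp.toLp 2 (g (WithLp.ofLp x))) x := by
  have e : InnerProductSpace.toDual ℝ _ (WithLp.toLp 2 (g (WithLp.ofLp x)))
      = (∑ j, g (WithLp.ofLp x) j • (ContinuousLinearMap.proj j : (Fin p → ℝ) →L[ℝ] ℝ)).comp
        (EuclideanSpace.equiv (Fin p) ℝ).toContinuousLinearMap := by
    ext v
    simp [PiLp.inner_apply, mul_comm]
  rw [hasGradientAt_iff_hasFDerivAt, e]
  exact (h (WithLp.ofLp x)).comp x (EuclideanSpace.equiv (Fin p) ℝ).hasFDerivAt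

theorem eucNorm_sub_sub_smul_sum_le {n : ℕ} {f : Fin n → (Fin p → ℝ) → ℝ}
    {g : Fin n → (Fin p → ℝ) → Fin p → ℝ} {μ L α : ℝ} (hgrad : ∀ i, IsGradient (f i) (g i))
    (hLip : ∀ i x x', eucNorm (g i x - g i x') ≤ L * eucNorm (x - x'))
    (hsc : ∀ i x x',
      f i x + (∑ j, g i x j * (x' j - x j)) + μ / 2 * eucNorm (x' - x) ^ 2 ≤ f i x')
    (hn : 0 < n) (hμ : 0 < μ) (hμL : μ ≤ L) (hα : 0 ≤ α) {xstar : Fin p → ℝ}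
    (hmin : ∀ w, ∑ i, f i xstar ≤ ∑ i, f i w) (w : Fin p → ℝ) :
    eucNorm (w - xstar - α • ∑ i, g i w)
      ≤ max |1 - n * L * α| |1 - n * μ * α| * eucNorm (w - xstar) := by
  have hsum := IsGradient.sum Finset.univ fun i _ => hgrad i
  have hG0 : ∑ i, g i xstar = 0 := hsum.eq_zero_of_forall_le hmin
  set F : EuclideanSpace ℝ (Fin p) → ℝ := fun u => ∑ i, f i (WithLp.ofLp u)
  set G : EuclideanSpace ℝ (Fin p) → EuclideanSpace ℝ (Fin p) :=
    fun u => WithLp.toLp 2 (∑ i, g i (WithLp.ofLp u))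
  have hscF : ∀ u v, F u + ⟪G u, v - u⟫ + n * μ / 2 * ‖v - u‖ ^ 2 ≤ F v := by
    intro u v
    have hinner : ⟪G u, v - u⟫
        = ∑ i, ∑ j, g i (WithLp.ofLp u) j * (WithLp.ofLp v j - WithLp.ofLp u j) := by
      rw [Finset.sum_comm]
      simp [G, PiLp.inner_apply, Finset.mul_sum, mul_comm]
    have hnorm : ‖v - u‖ = eucNorm (WithLp.ofLp v - WithLp.ofLp u) := by
      simp [eucNorm_eq_norm]
    have hsum_sc := Finset.sum_le_sum fun i (_ : i ∈ Finset.univ) =>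
      hsc i (WithLp.ofLp u) (WithLp.ofLp v)
    simp only [Finset.sum_add_distrib, Finset.sum_const, Finset.card_univ, Fintype.card_fin,
      nsmul_eq_mul] at hsum_sc
    rw [hinner, hnorm]
    linarith
  have hGL : ∀ u v, ‖G u - G v‖ ≤ n * L * ‖u - v‖ := by
    intro u v
    calc ‖G u - G v‖ = eucNorm (∑ i, (g i (WithLp.ofLp u) - g i (WithLp.ofLp v))) := by
          simp [G, eucNorm_eq_norm, Finset.sum_sub_distrib]
      _ ≤ ∑ i : Fin n, L * eucNorm (WithLp.ofLp u - WithLp.ofLp v) :=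
          (eucNorm_sum_le _ _).trans (Finset.sum_le_sum fun i _ => hLip i _ _)
      _ = n * L * ‖u - v‖ := by simp [eucNorm_eq_norm, mul_assoc]
  have := norm_gradient_step_sub_le hsum.hasGradientAt_ofLp hscF hGL (by positivity)
    (by gcongr) hα (WithLp.toLp 2 w) (WithLp.toLp 2 xstar)
  have e1 : WithLp.toLp 2 (w - xstar - α • ∑ i, g i w) = WithLp.toLp 2 w
      - α • WithLp.toLp 2 (∑ i, g i w) - (WithLp.toLp 2 xstar - α • WithLp.toLp 2 0) := by
    simp only [WithLp.toLp_sub, WithLp.toLp_smul, WithLp.toLp_zero, smul_zero]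
    abel
  have e2 : max |1 - n * L * α| |1 - n * μ * α| = max |1 - α * (n * L)| |1 - α * (n * μ)| := by
    ring_nf
  rw [eucNorm_eq_norm, eucNorm_eq_norm, e1, WithLp.toLp_sub, e2, ← hG0]
  exact this

end LocalObjectives

section Consensus

variable {n p : ℕ} {Rb : Matrix (Fin n) (Fin n) ℝ} {π : Fin n → ℝ}

lemma RK_mul_VinfK (hrow : ∀ i, ∑ j, Rb i j = 1) : RK n p Rb * VinfK n p π = VinfK n p π := by
  rw [RK, VinfK, ← mul_kronecker_mul, Matrix.one_mul]
  congr 1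
  ext i j
  simp [mul_apply, ← Finset.sum_mul, hrow]

lemma VinfK_mul_RK (hπstat : vecMul π Rb = π) : VinfK n p π * RK n p Rb = VinfK n p π := by
  rw [RK, VinfK, ← mul_kronecker_mul, Matrix.one_mul]
  congr 1
  ext i j
  simpa [mul_apply, vecMul, dotProduct] using congrFun hπstat j

lemma VinfK_mul_VinfK (hπsum : ∑ i, π i = 1) : VinfK n p π * VinfK n p π = VinfK n p π := by
  rw [VinfK, ← mul_kronecker_mul, Matrix.one_mul]
  congr 1
  ext i j
  simp [mul_apply, ← Finset.sum_mul, hπsum]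

lemma RK_pow (k : ℕ) : RK n p Rb ^ k = VK n p Rb k := by
  induction k with
  | zero => simp [VK]
  | succ k ih => rw [pow_succ, ih, VK, VK, RK, ← mul_kronecker_mul, Matrix.one_mul, pow_succ]

lemma VK_sub_VinfK (hrow : ∀ i, ∑ j, Rb i j = 1) (hπstat : vecMul π Rb = π)
    (hπsum : ∑ i, π i = 1) {k : ℕ} (hk : k ≠ 0) :
    VK n p Rb k - VinfK n p π = (RK n p Rb - VinfK n p π) ^ k := by
  rw [sub_pow_eq_pow_sub (RK_mul_VinfK hrow) (VinfK_mul_RK hπstat) (VinfK_mul_VinfK hπsum) hk,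
    RK_pow]

lemma VinfK_mulVec (z : Fin n × Fin p → ℝ) :
    VinfK n p π *ᵥ z = starVec n p (fun l => ∑ j, π j * z (j, l)) := by
  ext ⟨i, l⟩
  simp [VinfK, starVec, mulVec, dotProduct, Fintype.sum_prod_type, one_apply]

end Consensus

section Blocks

variable {n p : ℕ}

lemma eucNorm_starVec (w : Fin p → ℝ) : eucNorm (starVec n p w) = √n * eucNorm w := by
  rw [eucNorm, eucNorm, ← Real.sqrt_mul (Nat.cast_nonneg n)]
  simp [starVec, Fintype.sum_prod_type]

lemma sum_eucNorm_block_le (z : Fin n × Fin p → ℝ) :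
    ∑ j, eucNorm (fun l => z (j, l)) ≤ √n * eucNorm z := by
  have hsq : ∑ j : Fin n, eucNorm (fun l => z (j, l)) ^ 2 = eucNorm z ^ 2 := by
    simp [eucNorm_sq, Fintype.sum_prod_type]
  calc ∑ j, eucNorm (fun l => z (j, l))
      ≤ √(n * ∑ j : Fin n, eucNorm (fun l => z (j, l)) ^ 2) :=
        (le_abs_self _).trans <| Real.abs_le_sqrt <| by
          simpa using sq_sum_le_card_mul_sum_sq (s := Finset.univ)
            (f := fun j => eucNorm (fun l => z (j, l)))
    _ = √n * eucNorm z := by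
      rw [hsq, Real.sqrt_mul (Nat.cast_nonneg n), Real.sqrt_sq (eucNorm_nonneg z)]

end Blocks

section StochasticPowers

variable {n p : ℕ} {Rb : Matrix (Fin n) (Fin n) ℝ} {π : Fin n → ℝ}

lemma pow_apply_self_pos (hnonneg : ∀ i j, 0 ≤ Rb i j) (hdiag : ∀ i, 0 < Rb i i) (k : ℕ)
    (i : Fin n) : 0 < (Rb ^ k) i i := by
  induction k with
  | zero => simp
  | succ k ih =>
    rw [pow_succ', mul_apply]
    exact (mul_pos (hdiag i) ih).trans_le <| Finset.single_le_sum
      (f := fun c => Rb i c * (Rb ^ k) c i)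
      (fun c _ => mul_nonneg (hnonneg i c) (pow_apply_nonneg hnonneg k c i)) (Finset.mem_univ i)

lemma abs_pow_apply_self_sub_le (hp : 0 < p) {κ σ : ℝ}
    (hdev : ∀ k ≠ 0, ‖VK n p Rb k - VinfK n p π‖ ≤ κ * σ ^ k) (hκ : 1 ≤ κ)
    (hπpos : ∀ i, 0 < π i) (hπsum : ∑ i, π i = 1) (k : ℕ) (i : Fin n) :
    |(Rb ^ k) i i - π i| ≤ κ * σ ^ k := by
  rcases eq_or_ne k 0 with rfl | hk
  · have hπ1 : π i ≤ 1 :=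
      hπsum ▸ Finset.single_le_sum (fun j _ => (hπpos j).le) (Finset.mem_univ i)
    rw [pow_zero, pow_zero, one_apply_eq, mul_one, abs_of_nonneg (by linarith)]
    linarith [hπpos i]
  · have h := abs_apply_le_l2_opNorm (VK n p Rb k - VinfK n p π) (i, ⟨0, hp⟩) (i, ⟨0, hp⟩)
    simp only [VK, VinfK, Matrix.sub_apply, kroneckerMap_apply, one_apply_eq, mul_one,
      of_apply] at h
    exact h.trans (hdev k hk)

lemma l2_opNorm_VinfK_le_iSup {κ σ : ℝ} (hσ0 : 0 ≤ σ) (hσ1 : σ < 1)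
    (hdev : ∀ k ≠ 0, ‖VK n p Rb k - VinfK n p π‖ ≤ κ * σ ^ k) :
    ‖VinfK n p π‖ ≤ ⨆ k, ‖VK n p Rb k‖ :=
  norm_le_iSup_norm_of_tendsto <| tendsto_of_norm_sub_le_mul_pow hσ0 hσ1 <|
    eventually_atTop.2 ⟨1, fun k hk => hdev k (by omega)⟩

lemma abs_inv_pow_apply_self_sub_inv_le (hnonneg : ∀ i j, 0 ≤ Rb i j) (hdiag : ∀ i, 0 < Rb i i)
    (hp : 0 < p) (hπpos : ∀ i, 0 < π i) {κ σ : ℝ} (hσ0 : 0 ≤ σ) (hσ1 : σ < 1)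
    (hentry : ∀ k i, |(Rb ^ k) i i - π i| ≤ κ * σ ^ k) (k : ℕ) (i : Fin n) :
    |((Rb ^ k) i i)⁻¹ - (π i)⁻¹| ≤ (⨆ k, ‖VtinvK n p Rb k‖) ^ 2 * (κ * σ ^ k) := by
  have hlim : Tendsto (VtinvK n p Rb) atTop (𝓝 (diagonal fun q : Fin n × Fin p => (π q.1)⁻¹)) := by
    refine (continuous_id.matrix_diagonal.tendsto _).comp (tendsto_pi_nhds.2 fun q => ?_)
    exact (tendsto_of_norm_sub_le_mul_pow hσ0 hσ1
      (Eventually.of_forall fun k => hentry k q.1)).inv₀ (hπpos q.1).ne'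
  have hdiag_le : ∀ (D : Matrix (Fin n × Fin p) (Fin n × Fin p) ℝ) (i : Fin n),
      |D (i, ⟨0, hp⟩) (i, ⟨0, hp⟩)| ≤ ‖D‖ := fun D i => abs_apply_le_l2_opNorm D _ _
  refine abs_inv_sub_inv_le (pow_apply_self_pos hnonneg hdiag k i).ne' (hπpos i).ne' ?_ ?_
    (hentry k i)
  · simpa [VtinvK] using (hdiag_le _ i).trans (le_iSup_norm_of_tendsto hlim k)
  · simpa using (hdiag_le _ i).trans (norm_le_iSup_norm_of_tendsto hlim)

end StochasticPowers

section Averaging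

variable {n p : ℕ} {Rb : Matrix (Fin n) (Fin n) ℝ} {π : Fin n → ℝ}
  {g : Fin n → (Fin p → ℝ) → Fin p → ℝ}

lemma VinfK_mulVec_frsd_succ (hπstat : vecMul π Rb = π) {α β : ℝ}
    {x y : ℕ → Fin n × Fin p → ℝ} (hy0 : y 0 = 0)
    (hxrec : ∀ k, x (k + 1) = RK n p Rb *ᵥ x k - α • (y k + VtinvK n p Rb k *ᵥ gradf g (x k)))
    (hyrec : ∀ k, y (k + 1) = y k + β • ((1 - RK n p Rb) *ᵥ x (k + 1))) (k : ℕ) :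
    VinfK n p π *ᵥ x (k + 1)
      = VinfK n p π *ᵥ x k - α • (VinfK n p π *ᵥ (VtinvK n p Rb k *ᵥ gradf g (x k))) := by
  have hy : ∀ k, VinfK n p π *ᵥ y k = 0 := by
    intro k
    induction k with
    | zero => simp [hy0]
    | succ k ih =>
      rw [hyrec, mulVec_add, ih, mulVec_smul, mulVec_mulVec, Matrix.mul_sub, Matrix.mul_one,
        VinfK_mul_RK hπstat, sub_self, zero_mulVec, smul_zero, add_zero]
  rw [hxrec, mulVec_sub, mulVec_smul, mulVec_add, hy, zero_add, mulVec_mulVec,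
    VinfK_mul_RK hπstat]

theorem eucNorm_averaged_step_le {α η L v c : ℝ} {xstar : Fin p → ℝ} {d : Fin n → ℝ}
    (hπ : ∀ i, π i ≠ 0) (hLip : ∀ i x x', eucNorm (g i x - g i x') ≤ L * eucNorm (x - x'))
    (hcontr : ∀ w, eucNorm (w - xstar - α • ∑ i, g i w) ≤ η * eucNorm (w - xstar))
    (hv : ‖VinfK n p π‖ ≤ v) (hd : ∀ i, |(d i)⁻¹ - (π i)⁻¹| ≤ c) (hL : 0 ≤ L) (hc : 0 ≤ c)
    (hα : 0 ≤ α) (z : Fin n × Fin p → ℝ) :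
    eucNorm (VinfK n p π *ᵥ z - α • (VinfK n p π *ᵥ (diagonal (fun q => (d q.1)⁻¹) *ᵥ gradf g z))
        - starVec n p xstar)
      ≤ η * eucNorm (VinfK n p π *ᵥ z - starVec n p xstar)
        + α * n * L * eucNorm (z - VinfK n p π *ᵥ z) + α * v * c * eucNorm (gradf g z) := by
  set zbar : Fin p → ℝ := fun l => ∑ j, π j * z (j, l)
  set u := diagonal (fun q : Fin n × Fin p => (d q.1)⁻¹ - (π q.1)⁻¹) *ᵥ gradf g z
  have hsplit : VinfK n p π *ᵥ z - α • (VinfK n p π *ᵥ (diagonal (fun q => (d q.1)⁻¹) *ᵥ gradf g z))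
        - starVec n p xstar
      = starVec n p (zbar - xstar - α • ∑ i, g i zbar)
        - α • starVec n p (∑ j, (g j (fun l => z (j, l)) - g j zbar))
        - α • (VinfK n p π *ᵥ u) := by
    simp only [VinfK_mulVec]
    ext ⟨i, l⟩
    simp only [starVec, Pi.sub_apply, Pi.smul_apply, smul_eq_mul, Finset.sum_apply,
      mulVec_diagonal, gradf, u, Finset.sum_sub_distrib]
    have hsum : ∑ j, π j * ((d j)⁻¹ * g j (fun l => z (j, l)) l)
        = ∑ j, g j (fun l => z (j, l)) l
          + ∑ j, π j * (((d j)⁻¹ - (π j)⁻¹) * g j (fun l => z (j, l)) l) := by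
      rw [← Finset.sum_add_distrib]
      refine Finset.sum_congr rfl fun j _ => ?_
      field_simp [hπ j]
      ring
    rw [hsum]
    ring
  have h1 : eucNorm (starVec n p (zbar - xstar - α • ∑ i, g i zbar))
      ≤ η * eucNorm (VinfK n p π *ᵥ z - starVec n p xstar) := by
    rw [VinfK_mulVec, eucNorm_starVec, show starVec n p zbar - starVec n p xstar
      = starVec n p (zbar - xstar) from rfl, eucNorm_starVec, mul_left_comm]
    gcongr
    exact hcontr zbar
  have h2 : eucNorm (starVec n p (∑ j, (g j (fun l => z (j, l)) - g j zbar)))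
      ≤ n * L * eucNorm (z - VinfK n p π *ᵥ z) := by
    rw [VinfK_mulVec, eucNorm_starVec]
    calc √n * eucNorm (∑ j, (g j (fun l => z (j, l)) - g j zbar))
        ≤ √n * ∑ j, L * eucNorm (fun l => (z - starVec n p zbar) (j, l)) := by
          gcongr
          exact (eucNorm_sum_le _ _).trans (Finset.sum_le_sum fun j _ => hLip j _ _)
      _ ≤ √n * (L * (√n * eucNorm (z - starVec n p zbar))) := by
          rw [← Finset.mul_sum]
          gcongr
          exact sum_eucNorm_block_le _
      _ = n * L * eucNorm (z - starVec n p zbar) := by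
          linear_combination
            L * eucNorm (z - starVec n p zbar) * Real.mul_self_sqrt (Nat.cast_nonneg n)
  have h3 : eucNorm (VinfK n p π *ᵥ u) ≤ v * c * eucNorm (gradf g z) := by
    calc eucNorm (VinfK n p π *ᵥ u) ≤ ‖VinfK n p π‖ * eucNorm u := eucNorm_mulVec_le _ _
      _ ≤ v * (c * eucNorm (gradf g z)) := by
          refine mul_le_mul hv (eucNorm_le_of_abs_le (fun q => ?_) hc) (eucNorm_nonneg _)
            ((norm_nonneg _).trans hv)
          simp only [u, mulVec_diagonal, abs_mul]
          gcongr
          exact hd q.1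
      _ = v * c * eucNorm (gradf g z) := by ring
  rw [hsplit]
  calc _ ≤ eucNorm (starVec n p (zbar - xstar - α • ∑ i, g i zbar))
        + α * eucNorm (starVec n p (∑ j, (g j (fun l => z (j, l)) - g j zbar)))
        + α * eucNorm (VinfK n p π *ᵥ u) := by
        refine (eucNorm_sub_le _ _).trans ?_
        rw [eucNorm_smul, abs_of_nonneg hα]
        gcongr
        exact (eucNorm_sub_le _ _).trans (by rw [eucNorm_smul, abs_of_nonneg hα])
    _ ≤ _ := by
        have := mul_le_mul_of_nonneg_left h2 hα
        have := mul_le_mul_of_nonneg_left h3 hα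
        linarith

end Averaging

theorem stmt14_general (n p : ℕ) (hn : 1 ≤ n) (hp : 1 ≤ p) (Rb : Matrix (Fin n) (Fin n) ℝ)
    (hnonneg : ∀ i j, 0 ≤ Rb i j) (hrow : ∀ i, ∑ j, Rb i j = 1)
    (hdiag : ∀ i, 0 < Rb i i)
    (π : Fin n → ℝ) (hπpos : ∀ i, 0 < π i) (hπsum : ∑ i, π i = 1)
    (hπstat : Matrix.vecMul π Rb = π)
    (f : Fin n → (Fin p → ℝ) → ℝ) (g : Fin n → (Fin p → ℝ) → Fin p → ℝ)
    (μ L : ℝ) (hμ : 0 < μ) (hμL : μ ≤ L)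
    (hgrad : ∀ i, IsGradient (f i) (g i))
    (hLip : ∀ i x x', eucNorm (g i x - g i x') ≤ L * eucNorm (x - x'))
    (hsc : ∀ i x x',
      f i x + (∑ j, g i x j * (x' j - x j)) + μ / 2 * eucNorm (x' - x) ^ 2 ≤ f i x')
    (xstar : Fin p → ℝ)
    (hmin : ∀ w, ∑ i, f i xstar ≤ ∑ i, f i w)
    (NR NC : (Fin n × Fin p → ℝ) → ℝ)
    (hNRge : ∀ z, eucNorm z ≤ NR z) (hNCge : ∀ z, eucNorm z ≤ NC z)
    (κ₃ : ℝ)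
    (hκ₃R : ∀ z, NR z ≤ κ₃ * eucNorm z)
    (v vt : ℝ) (hv : v = ⨆ k : ℕ, specNorm (VK n p Rb k))
    (hvt : vt = ⨆ k : ℕ, specNorm (VtinvK n p Rb k))
    (σR : ℝ) (hσRdef : σR = opNorm NR (RK n p Rb - VinfK n p π))
    (hσR0 : 0 < σR) (hσR1 : σR < 1)
    (α β : ℝ) (hα0 : 0 < α)
    (x y : ℕ → (Fin n × Fin p → ℝ)) (hy0 : y 0 = 0)
    (hxrec : ∀ k, x (k + 1) =
      (RK n p Rb).mulVec (x k) - α • (y k + (VtinvK n p Rb k).mulVec (gradf g (x k))))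
    (hyrec : ∀ k, y (k + 1) = y k + β • ((1 - RK n p Rb).mulVec (x (k + 1))))
    (η : ℝ) (hη : η = max |1 - n * L * α| |1 - n * μ * α|) :
    ∀ k : ℕ,
      eucNorm ((VinfK n p π).mulVec (x (k + 1)) - starVec n p xstar) ≤
        η * eucNorm ((VinfK n p π).mulVec (x k) - starVec n p xstar)
          + α * n * L * NC (x k - (VinfK n p π).mulVec (x k))
          + α * v * vt ^ 2 * Real.sqrt n * κ₃ * σR ^ k * eucNorm (gradf g (x k)) := by
  intro k
  have hL : 0 ≤ L := hμ.le.trans hμL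
  simp only [specNorm_eq_l2_opNorm] at hv hvt
  subst hv hvt hη
  have hκ₃ : 1 ≤ κ₃ := by
    have : Nonempty (Fin n × Fin p) := ⟨(⟨0, hn⟩, ⟨0, hp⟩)⟩
    exact one_le_of_eucNorm_le_of_le_mul hNRge hκ₃R
  have hdev : ∀ j ≠ 0, ‖VK n p Rb j - VinfK n p π‖ ≤ κ₃ * σR ^ j := fun j hj => by
    rw [VK_sub_VinfK hrow hπstat hπsum hj, hσRdef]
    exact l2_opNorm_pow_le hNRge hκ₃R (by linarith) (hσRdef ▸ hσR0.le) j
  have hstep := eucNorm_averaged_step_le (fun i => (hπpos i).ne') hLip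
    (eucNorm_sub_sub_smul_sum_le hgrad hLip hsc hn hμ hμL hα0.le hmin)
    (l2_opNorm_VinfK_le_iSup hσR0.le hσR1 hdev)
    (abs_inv_pow_apply_self_sub_inv_le hnonneg hdiag hp hπpos hσR0.le hσR1
      (abs_pow_apply_self_sub_le hp hdev hκ₃ hπpos hπsum) k)
    hL (by positivity) hα0.le (x k)
  rw [VinfK_mulVec_frsd_succ hπstat hy0 hxrec hyrec k]
  refine hstep.trans (add_le_add (add_le_add le_rfl ?_) ?_)
  · exact mul_le_mul_of_nonneg_left (hNCge _) (mul_nonneg (by positivity) hL)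
  · have hv0 : 0 ≤ ⨆ j, ‖VK n p Rb j‖ := Real.iSup_nonneg fun j => norm_nonneg _
    have hsqrt : 1 ≤ √(n : ℝ) := Real.one_le_sqrt.mpr (by exact_mod_cast hn)
    have hgrad0 := eucNorm_nonneg (gradf g (x k))
    calc _ = α * (⨆ j, ‖VK n p Rb j‖) * (⨆ j, ‖VtinvK n p Rb j‖) ^ 2 * 1 * κ₃ * σR ^ k
          * eucNorm (gradf g (x k)) := by ring
      _ ≤ _ := by gcongr

/-- Lemma 7: if moreover `0 < α < 2/(nL)`, then for all `k ≥ 0`,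
`‖x̂(k+1)−x*_vec‖ ≤ η‖x̂(k)−x*_vec‖ + αnL‖x(k)−x̂(k)‖_C + αvṽ²√n κ₃ σ_R^k ‖∇f(x(k))‖`,
with `η = max{|1−nLα|, |1−nμα|}`. -/
theorem stmt14 (n p : ℕ) (hn : 1 ≤ n) (hp : 1 ≤ p) (Rb : Matrix (Fin n) (Fin n) ℝ)
    (hnonneg : ∀ i j, 0 ≤ Rb i j) (hrow : ∀ i, ∑ j, Rb i j = 1)
    (hdiag : ∀ i, 0 < Rb i i)
    (hirr : ∀ i j, ∃ k : ℕ, 0 < (Rb ^ k) i j)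
    (π : Fin n → ℝ) (hπpos : ∀ i, 0 < π i) (hπsum : ∑ i, π i = 1)
    (hπstat : Matrix.vecMul π Rb = π)
    (f : Fin n → (Fin p → ℝ) → ℝ) (g : Fin n → (Fin p → ℝ) → Fin p → ℝ)
    (μ L : ℝ) (hμ : 0 < μ) (hμL : μ ≤ L)
    (hgrad : ∀ i, IsGradient (f i) (g i))
    (hLip : ∀ i x x', eucNorm (g i x - g i x') ≤ L * eucNorm (x - x'))
    (hsc : ∀ i x x',
      f i x + (∑ j, g i x j * (x' j - x j)) + μ / 2 * eucNorm (x' - x) ^ 2 ≤ f i x')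
    (xstar : Fin p → ℝ)
    (hmin : ∀ w, ∑ i, f i xstar ≤ ∑ i, f i w)
    (huniq : ∀ w, (∀ w', ∑ i, f i w ≤ ∑ i, f i w') → w = xstar)
    (NR NC : (Fin n × Fin p → ℝ) → ℝ)
    (hNRtri : ∀ z w, NR (z + w) ≤ NR z + NR w)
    (hNRhom : ∀ (a : ℝ) z, NR (a • z) = |a| * NR z)
    (hNRdef : ∀ z, NR z = 0 ↔ z = 0)
    (hNCtri : ∀ z w, NC (z + w) ≤ NC z + NC w)
    (hNChom : ∀ (a : ℝ) z, NC (a • z) = |a| * NC z)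
    (hNCdef : ∀ z, NC z = 0 ↔ z = 0)
    (hNRge : ∀ z, eucNorm z ≤ NR z) (hNCge : ∀ z, eucNorm z ≤ NC z)
    (κ₁ κ₂ κ₃ κ₄ : ℝ) (hκ₁ : 0 < κ₁) (hκ₂ : 0 < κ₂) (hκ₃ : 0 < κ₃) (hκ₄ : 0 < κ₄)
    (hκ₁R : ∀ z, NR z ≤ κ₁ * NC z) (hκ₂C : ∀ z, NC z ≤ κ₂ * NR z)
    (hκ₃R : ∀ z, NR z ≤ κ₃ * eucNorm z) (hκ₄C : ∀ z, NC z ≤ κ₄ * eucNorm z)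
    (v vt : ℝ) (hv : v = ⨆ k : ℕ, specNorm (VK n p Rb k))
    (hvt : vt = ⨆ k : ℕ, specNorm (VtinvK n p Rb k))
    (σR : ℝ) (hσRdef : σR = opNorm NR (RK n p Rb - VinfK n p π))
    (hσR0 : 0 < σR) (hσR1 : σR < 1)
    (α β : ℝ) (hα0 : 0 < α) (hβ0 : 0 < β) (hαβ : α * β < 1)
    (x y : ℕ → (Fin n × Fin p → ℝ)) (hy0 : y 0 = 0)
    (hxrec : ∀ k, x (k + 1) =
      (RK n p Rb).mulVec (x k) - α • (y k + (VtinvK n p Rb k).mulVec (gradf g (x k))))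
    (hyrec : ∀ k, y (k + 1) = y k + β • ((1 - RK n p Rb).mulVec (x (k + 1))))
    (hα2 : α < 2 / (n * L))
    (η : ℝ) (hη : η = max |1 - n * L * α| |1 - n * μ * α|) :
    ∀ k : ℕ,
      eucNorm ((VinfK n p π).mulVec (x (k + 1)) - starVec n p xstar) ≤
        η * eucNorm ((VinfK n p π).mulVec (x k) - starVec n p xstar)
          + α * n * L * NC (x k - (VinfK n p π).mulVec (x k))
          + α * v * vt ^ 2 * Real.sqrt n * κ₃ * σR ^ k * eucNorm (gradf g (x k)) :=
  stmt14_general n p hn hp Rb hnonneg hrow hdiag π hπpos hπsum hπstat f g μ L hμ hμL hgrad hLip hsc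
    xstar hmin NR NC hNRge hNCge κ₃ hκ₃R v vt hv hvt σR hσRdef hσR0 hσR1 α β hα0 x y hy0 hxrec hyrec
    η hη
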